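/- arXiv:math/0604154 — 2 statements merged into one kernel-verified Lean document; each statement's English description precedes it below -/
import Mathlib

section
/- Suppose m₀, m₁, m₂, m₃ : ℝ → ℝ are differentiable functions, f : ℝ × S² → ℝ is continuous with f ≥ 0, and for each u: m₀'(u) = -(1/(4π)) ∫_{S²} f(u,·) dS and mᵢ'(u) = -(1/(4π)) ∫_{S²} f(u,·) nⁱ dS for i = 1,2,3. Then at every u where (m₁(u), m₂(u), m₃(u)) ≠ 0 and the function u ↦ m₀(u) - √(m₁(u)² + m₂(u)² + m₃(u)²) is differentiable, its derivative is ≤ 0. -/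
open MeasureTheory

abbrev Sphere2 : Type := Metric.sphere (0 : EuclideanSpace ℝ (Fin 3)) 1

noncomputable def sphereMeasure : Measure Sphere2 :=
  (volume : Measure (EuclideanSpace ℝ (Fin 3))).toSphere

noncomputable def sphereN (i : Fin 3) (x : Sphere2) : ℝ :=
  (x : EuclideanSpace ℝ (Fin 3)) i

/-- Bondi mass-loss: if m₀′(u) = -(1/4π)∫ f(u,·) dS and mᵢ′(u) = -(1/4π)∫ f(u,·) nⁱ dS
with f continuous and nonnegative, then at any u where (m₁,m₂,m₃)(u) ≠ 0 and
m₀ - √(m₁²+m₂²+m₃²) is differentiable, its derivative is ≤ 0. -/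
theorem bondi_mass_loss_deriv_nonpos
    (m₀ : ℝ → ℝ) (m : Fin 3 → ℝ → ℝ) (f : ℝ → Sphere2 → ℝ)
    (hfc : Continuous (fun p : ℝ × Sphere2 => f p.1 p.2))
    (hf0 : ∀ u x, 0 ≤ f u x)
    (hm₀ : ∀ u, HasDerivAt m₀ (-(1 / (4 * Real.pi)) * ∫ x, f u x ∂sphereMeasure) u)
    (hm : ∀ i u, HasDerivAt (m i)
      (-(1 / (4 * Real.pi)) * ∫ x, f u x * sphereN i x ∂sphereMeasure) u)
    (u : ℝ) (hne : ∃ i, m i u ≠ 0) (d : ℝ)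
    (hd : HasDerivAt (fun u => m₀ u - Real.sqrt (∑ i : Fin 3, (m i u) ^ 2)) d u) :
    d ≤ 0 := by
  obtain ⟨j, hj⟩ := hne
  have hS : 0 < ∑ i : Fin 3, (m i u) ^ 2 :=
    Finset.sum_pos' (fun i _ => sq_nonneg _) ⟨j, Finset.mem_univ j, by positivity⟩
  set r := Real.sqrt (∑ i : Fin 3, (m i u) ^ 2) with hrdef
  have hr : 0 < r := Real.sqrt_pos.mpr hS
  -- derivative of the sum of squares
  have hsum : HasDerivAt (fun u => ∑ i : Fin 3, (m i u) ^ 2)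
      (∑ i : Fin 3, 2 * m i u * (-(1 / (4 * Real.pi)) * ∫ x, f u x * sphereN i x ∂sphereMeasure)) u := by
    apply HasDerivAt.fun_sum
    intro i _
    have := ((hm i u).fun_pow 2)
    simpa [mul_comm, mul_assoc, mul_left_comm] using this
  have hsqrt := hsum.sqrt hS.ne'
  have hD : HasDerivAt (fun u => m₀ u - Real.sqrt (∑ i : Fin 3, (m i u) ^ 2))
      ((-(1 / (4 * Real.pi)) * ∫ x, f u x ∂sphereMeasure) -
        (∑ i : Fin 3, 2 * m i u * (-(1 / (4 * Real.pi)) * ∫ x, f u x * sphereN i x ∂sphereMeasure)) / (2 * r)) u :=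
    (hm₀ u).sub hsqrt
  have hdval := hd.unique hD
  -- integrability
  haveI : IsFiniteMeasure sphereMeasure := by unfold sphereMeasure; infer_instance
  have hint : ∀ g : Sphere2 → ℝ, Continuous g → Integrable g sphereMeasure := fun g hg =>
    hg.integrable_of_hasCompactSupport (HasCompactSupport.of_compactSpace g)
  have hfu : Continuous (f u) := hfc.comp (Continuous.prodMk_right u)
  have hnc : ∀ i, Continuous (sphereN i) := fun i =>
    (continuous_apply i).comp ((PiLp.continuous_ofLp 2 _).comp continuous_subtype_val)
  -- key inequality: ∑ mᵢ ∫ f nⁱ ≤ r ∫ f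
  have key : ∑ i : Fin 3, m i u * ∫ x, f u x * sphereN i x ∂sphereMeasure ≤
      r * ∫ x, f u x ∂sphereMeasure := by
    have h1 : ∑ i : Fin 3, m i u * ∫ x, f u x * sphereN i x ∂sphereMeasure
        = ∫ x, ∑ i : Fin 3, m i u * (f u x * sphereN i x) ∂sphereMeasure := by
      rw [integral_finset_sum]
      · exact Finset.sum_congr rfl fun i _ => (integral_const_mul _ _).symm
      · intro i _
        exact hint _ (continuous_const.mul (hfu.mul (hnc i)))
    rw [h1, mul_comm r, ← integral_mul_const]
    apply integral_mono
    · apply hint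
      exact continuous_finset_sum _ fun i _ => continuous_const.mul (hfu.mul (hnc i))
    · exact hint _ (hfu.mul continuous_const)
    · intro x
      set v : EuclideanSpace ℝ (Fin 3) := (WithLp.equiv 2 _).symm (fun i => m i u) with hv
      have hx : ∑ i : Fin 3, m i u * sphereN i x ≤ r := by
        have hcs := abs_real_inner_le_norm v (x : EuclideanSpace ℝ (Fin 3))
        have hnx : ‖(x : EuclideanSpace ℝ (Fin 3))‖ = 1 := by
          simpa using mem_sphere_zero_iff_norm.mp x.2
        have hnm : ‖v‖ = r := by
          rw [EuclideanSpace.norm_eq, hrdef]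
          congr 1
          refine Finset.sum_congr rfl fun i _ => ?_
          rw [Real.norm_eq_abs, sq_abs]
          rfl
        have hinner : (inner ℝ v ((x : EuclideanSpace ℝ (Fin 3))) : ℝ)
            = ∑ i : Fin 3, m i u * sphereN i x := by
          rw [PiLp.inner_apply]
          refine Finset.sum_congr rfl fun i _ => ?_
          simp [sphereN, RCLike.inner_apply, conj_trivial, hv, mul_comm]
        calc ∑ i : Fin 3, m i u * sphereN i x
            ≤ |∑ i : Fin 3, m i u * sphereN i x| := le_abs_self _
          _ ≤ r := by rw [← hinner]; simpa [hnx, hnm] using hcs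
      show ∑ i : Fin 3, m i u * (f u x * sphereN i x) ≤ f u x * r
      calc ∑ i : Fin 3, m i u * (f u x * sphereN i x)
          = f u x * ∑ i : Fin 3, m i u * sphereN i x := by
            rw [Finset.mul_sum]; exact Finset.sum_congr rfl fun i _ => by ring
        _ ≤ f u x * r := mul_le_mul_of_nonneg_left hx (hf0 u x)
  -- finish
  have hc : (0:ℝ) < 1 / (4 * Real.pi) := by positivity
  set c := 1 / (4 * Real.pi)
  set I₀ := ∫ x, f u x ∂sphereMeasure with hI₀
  set Sm := ∑ i : Fin 3, m i u * ∫ x, f u x * sphereN i x ∂sphereMeasure with hSm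
  have h2 : (∑ i : Fin 3, 2 * m i u * (-c * ∫ x, f u x * sphereN i x ∂sphereMeasure))
      = -(2 * c) * Sm := by
    rw [hSm, Finset.mul_sum]
    exact Finset.sum_congr rfl fun i _ => by ring
  rw [hdval, h2]
  have h3 : (-(2 * c) * Sm) / (2 * r) = -(c * (Sm / r)) := by
    field_simp
  rw [h3]
  have h4 : Sm / r ≤ I₀ := (div_le_iff₀ hr).mpr (by linarith [key])
  have h5 := mul_le_mul_of_nonneg_left h4 hc.le
  simp only [sub_neg_eq_add]
  linarith
end

section
/- Suppose m₀, m₁, m₂, m₃ : ℝ → ℝ are continuously differentiable, f : ℝ × S² → ℝ is continuous with f ≥ 0, m₀'(u) = -(1/(4π)) ∫_{S²} f(u,·) dS, mᵢ'(u) = -(1/(4π)) ∫_{S²} f(u,·) nⁱ dS for i = 1,2,3, and (m₁(u), m₂(u), m₃(u)) ≠ 0 for all u in an interval [a,b]. Then m₀(b) - |m(b)| ≤ m₀(a) - |m(a)|, where |m(u)| = √(m₁(u)² + m₂(u)² + m₃(u)²). -/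
open MeasureTheory

lemma sphereN_continuous (i : Fin 3) : Continuous (fun x : Sphere2 => sphereN i x) := by
  unfold sphereN
  exact (continuous_apply i).comp ((PiLp.continuous_ofLp 2 _).comp continuous_subtype_val)

lemma sphereN_sq_sum (x : Sphere2) : ∑ i : Fin 3, sphereN i x ^ 2 = 1 := by
  have h : ‖(x : EuclideanSpace ℝ (Fin 3))‖ = 1 := by
    simpa using mem_sphere_zero_iff_norm.mp x.2
  rw [EuclideanSpace.norm_eq] at h
  have := congrArg (· ^ 2) h
  simp only [Real.sq_sqrt (by positivity : (0:ℝ) ≤ ∑ i, ‖(x : EuclideanSpace ℝ (Fin 3)) i‖^2)] at this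
  simpa [sphereN, sq_abs] using this

instance : IsFiniteMeasure sphereMeasure := by
  unfold sphereMeasure; infer_instance

lemma cont_integrable {g : Sphere2 → ℝ} (hg : Continuous g) : Integrable g sphereMeasure :=
  hg.integrable_of_hasCompactSupport (HasCompactSupport.of_compactSpace g)

/-- Integrated Bondi mass-loss: under the mass-loss ODEs with C¹ data and
(m₁,m₂,m₃) ≠ 0 on [a,b], the quantity m₀ - |m| is non-increasing:
m₀(b) - |m(b)| ≤ m₀(a) - |m(a)|. -/
theorem bondi_mass_loss_integrated
    (m₀ : ℝ → ℝ) (m : Fin 3 → ℝ → ℝ) (f : ℝ → Sphere2 → ℝ)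
    (hm₀C : ContDiff ℝ 1 m₀) (hmC : ∀ i, ContDiff ℝ 1 (m i))
    (hfc : Continuous (fun p : ℝ × Sphere2 => f p.1 p.2))
    (hf0 : ∀ u x, 0 ≤ f u x)
    (hm₀ : ∀ u, deriv m₀ u = -(1 / (4 * Real.pi)) * ∫ x, f u x ∂sphereMeasure)
    (hm : ∀ i u, deriv (m i) u
      = -(1 / (4 * Real.pi)) * ∫ x, f u x * sphereN i x ∂sphereMeasure)
    (a b : ℝ) (hab : a ≤ b)
    (hne : ∀ u ∈ Set.Icc a b, ∃ i, m i u ≠ 0) :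
    m₀ b - Real.sqrt (∑ i : Fin 3, (m i b) ^ 2)
      ≤ m₀ a - Real.sqrt (∑ i : Fin 3, (m i a) ^ 2) := by
  have hπ : (0:ℝ) < 4 * Real.pi := by positivity
  set c : ℝ := -(1 / (4 * Real.pi)) with hc
  have hc0 : c ≤ 0 := by
    have : (0:ℝ) ≤ 1 / (4 * Real.pi) := by positivity
    simpa [hc] using neg_nonpos.mpr this
  set S : ℝ → ℝ := fun u => ∑ i : Fin 3, (m i u) ^ 2 with hSdef
  have hSpos : ∀ u ∈ Set.Icc a b, 0 < S u := by
    intro u hu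
    obtain ⟨i, hi⟩ := hne u hu
    have h1 : (0:ℝ) < (m i u) ^ 2 := by positivity
    exact lt_of_lt_of_le h1
      (Finset.single_le_sum (fun j _ => sq_nonneg (m j u)) (Finset.mem_univ i))
  -- continuity of fibers
  have hfu : ∀ u, Continuous (fun x => f u x) := fun u =>
    hfc.comp (Continuous.prodMk_right u)
  have int_f : ∀ u, Integrable (fun x => f u x) sphereMeasure := fun u =>
    cont_integrable (hfu u)
  have int_fn : ∀ u i, Integrable (fun x => f u x * sphereN i x) sphereMeasure := fun u i =>
    cont_integrable ((hfu u).mul (sphereN_continuous i))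
  -- derivatives
  have hm₀d : ∀ u, HasDerivAt m₀ (deriv m₀ u) u := fun u =>
    (hm₀C.differentiable one_ne_zero u).hasDerivAt
  have hmd : ∀ i u, HasDerivAt (m i) (deriv (m i) u) u := fun i u =>
    ((hmC i).differentiable one_ne_zero u).hasDerivAt
  set D : ℝ → ℝ := fun u => ∑ i : Fin 3, m i u * deriv (m i) u with hDdef
  have hSder : ∀ u, HasDerivAt S (2 * D u) u := by
    intro u
    have h : HasDerivAt (fun u => ∑ i : Fin 3, (m i u) ^ 2)
        (∑ i : Fin 3, (2:ℕ) * (m i u) ^ (2-1) * deriv (m i) u) u :=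
      HasDerivAt.fun_sum (fun i _ => (hmd i u).pow 2)
    convert h using 1
    simp only [hDdef, Finset.mul_sum]
    exact Finset.sum_congr rfl fun i _ => by norm_num; ring
  set g : ℝ → ℝ := fun u => m₀ u - Real.sqrt (S u) with hgdef
  -- derivative of g on points where S ≠ 0
  have hgder : ∀ u, S u ≠ 0 →
      HasDerivAt g (deriv m₀ u - 2 * D u / (2 * Real.sqrt (S u))) u := by
    intro u hu
    exact (hm₀d u).sub ((hSder u).sqrt hu)
  -- key inequality
  have key : ∀ u ∈ Set.Icc a b, deriv m₀ u - 2 * D u / (2 * Real.sqrt (S u)) ≤ 0 := by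
    intro u hu
    have hS : 0 < S u := hSpos u hu
    have hsq : 0 < Real.sqrt (S u) := Real.sqrt_pos.mpr hS
    -- Cauchy-Schwarz pointwise bound
    have hcs : ∀ x : Sphere2, (∑ i : Fin 3, m i u * sphereN i x) ≤ Real.sqrt (S u) := by
      intro x
      have h1 : (∑ i : Fin 3, m i u * sphereN i x) ^ 2 ≤ S u := by
        have := Finset.sum_mul_sq_le_sq_mul_sq Finset.univ
          (fun i => m i u) (fun i => sphereN i x)
        simpa [hSdef, sphereN_sq_sum x] using this
      calc (∑ i : Fin 3, m i u * sphereN i x)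
          ≤ |∑ i : Fin 3, m i u * sphereN i x| := le_abs_self _
        _ = Real.sqrt ((∑ i : Fin 3, m i u * sphereN i x) ^ 2) :=
            (Real.sqrt_sq_eq_abs _).symm
        _ ≤ Real.sqrt (S u) := Real.sqrt_le_sqrt h1
    -- D u = c * ∫ f * (∑ mᵢ nⁱ)
    have hD : D u = c * ∫ x, f u x * (∑ i : Fin 3, m i u * sphereN i x) ∂sphereMeasure := by
      have h1 : ∀ i : Fin 3, m i u * deriv (m i) u
          = ∫ x, c * (m i u * (f u x * sphereN i x)) ∂sphereMeasure := by
        intro i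
        rw [hm i u, integral_const_mul]
        rw [integral_const_mul]
        ring
      calc D u = ∑ i : Fin 3, ∫ x, c * (m i u * (f u x * sphereN i x)) ∂sphereMeasure := by
            rw [hDdef]; exact Finset.sum_congr rfl fun i _ => h1 i
        _ = ∫ x, ∑ i : Fin 3, c * (m i u * (f u x * sphereN i x)) ∂sphereMeasure := by
            rw [integral_finset_sum]
            intro i _
            exact ((int_fn u i).const_mul (m i u)).const_mul c
        _ = c * ∫ x, f u x * (∑ i : Fin 3, m i u * sphereN i x) ∂sphereMeasure := by
            rw [← integral_const_mul]
            congr 1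
            ext x
            rw [Finset.mul_sum, ← Finset.mul_sum]
            congr 1
            apply Finset.sum_congr rfl
            intro i _
            ring
    -- integral bound
    have hintle : (∫ x, f u x * (∑ i : Fin 3, m i u * sphereN i x) ∂sphereMeasure)
        ≤ Real.sqrt (S u) * ∫ x, f u x ∂sphereMeasure := by
      have h1 : (∫ x, f u x * (∑ i : Fin 3, m i u * sphereN i x) ∂sphereMeasure)
          ≤ ∫ x, f u x * Real.sqrt (S u) ∂sphereMeasure := by
        apply integral_mono _ ((int_f u).mul_const _)
        · intro x
          exact mul_le_mul_of_nonneg_left (hcs x) (hf0 u x)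
        · have : Integrable (fun x => ∑ i : Fin 3, c⁻¹ * (m i u * (f u x * sphereN i x)))
              sphereMeasure := by
            apply integrable_finset_sum
            intro i _
            exact ((int_fn u i).const_mul (m i u)).const_mul c⁻¹
          apply cont_integrable
          exact (hfu u).mul (continuous_finset_sum _ fun i _ =>
            (continuous_const.mul (sphereN_continuous i)))
      calc (∫ x, f u x * (∑ i : Fin 3, m i u * sphereN i x) ∂sphereMeasure)
          ≤ ∫ x, f u x * Real.sqrt (S u) ∂sphereMeasure := h1
        _ = Real.sqrt (S u) * ∫ x, f u x ∂sphereMeasure := by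
            rw [integral_mul_const]; ring
    -- combine: D u ≥ √S * deriv m₀ u
    have hDge : Real.sqrt (S u) * deriv m₀ u ≤ D u := by
      rw [hD, hm₀ u]
      calc Real.sqrt (S u) * (c * ∫ x, f u x ∂sphereMeasure)
          = c * (Real.sqrt (S u) * ∫ x, f u x ∂sphereMeasure) := by ring
        _ ≤ c * ∫ x, f u x * (∑ i : Fin 3, m i u * sphereN i x) ∂sphereMeasure :=
            mul_le_mul_of_nonpos_left hintle hc0
    have h2 : 2 * D u / (2 * Real.sqrt (S u)) = D u / Real.sqrt (S u) := by
      rw [mul_div_mul_left _ _ (two_ne_zero)]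
    rw [h2, sub_nonpos, le_div_iff₀ hsq]
    linarith [hDge]
  -- monotonicity
  have hanti : AntitoneOn g (Set.Icc a b) := by
    apply antitoneOn_of_deriv_nonpos (convex_Icc a b)
    · apply ContinuousOn.sub (hm₀C.continuous.continuousOn)
      exact (Real.continuous_sqrt.comp
        (continuous_finset_sum _ fun i _ => ((hmC i).continuous.pow 2))).continuousOn
    · intro u hu
      rw [interior_Icc] at hu
      have hu' : u ∈ Set.Icc a b := Set.Ioo_subset_Icc_self hu
      exact (hgder u (hSpos u hu').ne').differentiableAt.differentiableWithinAt
    · intro u hu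
      rw [interior_Icc] at hu
      have hu' : u ∈ Set.Icc a b := Set.Ioo_subset_Icc_self hu
      rw [(hgder u (hSpos u hu').ne').deriv]
      exact key u hu'
  have := hanti (Set.left_mem_Icc.2 hab) (Set.right_mem_Icc.2 hab) hab
  simpa [hgdef, hSdef] using this
end
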